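/- arXiv:2004.11160 — 2 statements merged into one kernel-verified Lean document; each statement's English description precedes it below -/
import Mathlib

section
/- The arithmetic-pattern equivalence relation is finer than the permutation-pattern equivalence: if two real vectors U, V of length D satisfy α(U) = α(V) (equal rank patterns counting strict inequalities), then sorting both with the tie-breaking rule 'among equal values, larger index first' yields the same sorting permutation, i.e., for all i, j: (U_i < U_j ∨ (U_i = U_j ∧ i < j)) ↔ (V_i < V_j ∨ (V_i = V_j ∧ i < j)). -/
lemma rank_lt_of_lt {D : ℕ} (W : Fin D → ℝ) {i j : Fin D} (h : W i < W j) :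
    (Finset.univ.filter (fun k => W k < W i)).card <
    (Finset.univ.filter (fun k => W k < W j)).card := by
  apply Finset.card_lt_card
  constructor
  · intro k hk
    simp only [Finset.mem_filter, Finset.mem_univ, true_and] at *
    exact hk.trans h
  · intro hsub
    have := hsub (Finset.mem_filter.mpr ⟨Finset.mem_univ i, h⟩)
    simp at this

lemma rank_lt_iff {D : ℕ} (W : Fin D → ℝ) (i j : Fin D) :
    (Finset.univ.filter (fun k => W k < W i)).card <
    (Finset.univ.filter (fun k => W k < W j)).card ↔ W i < W j := by
  constructor
  · intro h
    rcases lt_trichotomy (W i) (W j) with h' | h' | h'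
    · exact h'
    · simp [h'] at h
    · exact absurd (rank_lt_of_lt W h') (by omega)
  · exact rank_lt_of_lt W

theorem arithmetic_finer_than_permutation (D : ℕ) (U V : Fin D → ℝ)
    (hα : (fun i => (Finset.univ.filter (fun j => U j < U i)).card) =
          (fun i => (Finset.univ.filter (fun j => V j < V i)).card)) :
    ∀ i j : Fin D,
      (U i < U j ∨ (U i = U j ∧ i < j)) ↔ (V i < V j ∨ (V i = V j ∧ i < j)) := by
  have key : ∀ i j, (U i < U j ↔ V i < V j) := by
    intro i j
    rw [← rank_lt_iff U i j, ← rank_lt_iff V i j,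
      congrFun hα i, congrFun hα j]
  have keyeq : ∀ i j, (U i = U j ↔ V i = V j) := by
    intro i j
    constructor <;> intro h
    · rcases lt_trichotomy (V i) (V j) with h' | h' | h'
      · exact absurd ((key i j).mpr h') (by simp [h])
      · exact h'
      · exact absurd ((key j i).mpr h') (by simp [h])
    · rcases lt_trichotomy (U i) (U j) with h' | h' | h'
      · exact absurd ((key i j).mp h') (by simp [h])
      · exact h'
      · exact absurd ((key j i).mp h') (by simp [h])
  intro i j
  rw [key i j, keyeq i j]
end

section
/- MPE2 symbolization is equivalent to the arithmetic-pattern symbolization: for vectors U, V of length D, α(U) = α(V) if and only if σ(U) = σ(V), where σ(W) = (π(W), e(W)) consists of the sorting permutation π(W) (ascending, ties broken by smaller index first) and the tie-indicator vector e(W) with e_i = 1 iff the i-th and (i−1)-th elements in the sorted order of W are equal. -/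
/-!
The rank `α(W) i` counts the distinct values below `W i`, so `α(U) = α(V)` forces `U` and `V` to
have the same strict order pattern `(i, j) ↦ [W i < W j]`. The stably sorting permutation
is Mathlib's `Tuple.sort W`, which depends only on that pattern, and so do the ties. Conversely,
along the sorted order the rank starts at `0` and goes up by one exactly where there is no tie, so
`π(W)` and `e(W)` determine `α(W)`.
-/

open Finset

theorem Finset.strictMonoOn_card_filter_lt {α : Type*} [LinearOrder α] (s : Finset α) :
    StrictMonoOn (fun x => #{y ∈ s | y < x}) s := by
  intro a ha b _ hab
  refine card_lt_card <|
    (ssubset_iff_of_subset <| monotone_filter_right s fun y _ hy => hy.trans hab).2 ⟨a, ?_, ?_⟩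
  all_goals simp_all

theorem eq_iff_eq_of_lt_iff_lt {ι α β : Type*} [LinearOrder α] [LinearOrder β]
    {f : ι → α} {g : ι → β} (h : ∀ i j, f i < f j ↔ g i < g j) (i j : ι) :
    f i = f j ↔ g i = g j := by
  simp only [le_antisymm_iff, ← not_lt, h]

namespace Tuple

variable {n : ℕ} {α β : Type*} [LinearOrder α] [LinearOrder β]

theorem eq_sort_of_lt_imp {f : Fin n → α} {σ : Equiv.Perm (Fin n)}
    (h : ∀ j k, j < k → f (σ j) < f (σ k) ∨ (f (σ j) = f (σ k) ∧ σ j < σ k)) : σ = sort f :=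
  eq_sort_iff'.2 fun _ _ hjk => Prod.Lex.toLex_lt_toLex.2 (h _ _ hjk)

theorem sort_eq_sort_of_lt_iff_lt {f : Fin n → α} {g : Fin n → β}
    (h : ∀ i j, f i < f j ↔ g i < g j) : sort f = sort g := by
  refine eq_sort_iff.2 ⟨fun i j hij => ?_, fun i j hij hg => ?_⟩
  · simpa only [Function.comp, ← not_lt, h] using monotone_sort f hij
  · exact (eq_sort_iff.1 rfl).2 i j hij ((eq_iff_eq_of_lt_iff_lt h _ _).2 hg)

end Tuple

section DistinctRank

variable {ι α : Type*} [Fintype ι] [LinearOrder α]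

noncomputable def distinctRank (W : ι → α) (i : ι) : ℕ :=
  #{x ∈ univ.image W | x < W i}

theorem distinctRank_lt_distinctRank_iff {W : ι → α} {i j : ι} :
    distinctRank W i < distinctRank W j ↔ W i < W j :=
  (strictMonoOn_card_filter_lt _).lt_iff_lt (by simp) (by simp)

theorem distinctRank_eq_zero {W : ι → α} {i : ι} (h : ∀ j, W i ≤ W j) :
    distinctRank W i = 0 := by
  simp [distinctRank, h]

theorem distinctRank_eq_add_one {W : ι → α} {i j : ι} (hij : W i < W j)
    (hgap : ∀ k, W k < W j → W k ≤ W i) : distinctRank W j = distinctRank W i + 1 := by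
  have : {x ∈ univ.image W | x < W j} = insert (W i) {x ∈ univ.image W | x < W i} := by
    ext x
    simp only [mem_insert, mem_filter, mem_image, mem_univ, true_and]
    constructor
    · rintro ⟨⟨k, rfl⟩, hk⟩
      exact (hgap k hk).eq_or_lt.imp id fun h => ⟨⟨k, rfl⟩, h⟩
    · rintro (rfl | ⟨hx, hxi⟩)
      exacts [⟨⟨i, rfl⟩, hij⟩, ⟨hx, hxi.trans hij⟩]
  rw [distinctRank, distinctRank, this, card_insert_of_notMem (by simp)]

end DistinctRank
section Sorted

variable {n : ℕ} {α β : Type*} [LinearOrder α] [LinearOrder β]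
  {W : Fin (n + 1) → α} {p : Equiv.Perm (Fin (n + 1))}

theorem distinctRank_apply_zero_of_monotone (hW : Monotone (W ∘ p)) : distinctRank W (p 0) = 0 :=
  distinctRank_eq_zero <| p.surjective.forall.2 fun _ => hW (Fin.zero_le _)

theorem distinctRank_apply_succ_of_monotone (hW : Monotone (W ∘ p)) (i : Fin n) :
    distinctRank W (p i.succ) =
      distinctRank W (p i.castSucc) + if W (p i.succ) = W (p i.castSucc) then 0 else 1 := by
  split_ifs with htie
  · simp only [distinctRank, htie, add_zero]
  refine distinctRank_eq_add_one ((hW (Fin.castSucc_le_succ i)).lt_of_ne' htie) ?_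
  refine p.surjective.forall.2 fun k hk => ?_
  rcases le_or_gt k i.castSucc with hki | hki
  · exact hW hki
  · exact absurd (hW (Fin.castSucc_lt_iff_succ_le.1 hki)) hk.not_ge

theorem distinctRank_eq_of_monotone_of_ties {U : Fin (n + 1) → α} {V : Fin (n + 1) → β}
    (hU : Monotone (U ∘ p)) (hV : Monotone (V ∘ p))
    (hties : ∀ i : Fin n, U (p i.succ) = U (p i.castSucc) ↔ V (p i.succ) = V (p i.castSucc)) :
    distinctRank U = distinctRank V := by
  suffices ∀ j, distinctRank U (p j) = distinctRank V (p j) from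
    funext <| p.surjective.forall.2 this
  intro j
  induction j using Fin.induction with
  | zero => rw [distinctRank_apply_zero_of_monotone hU, distinctRank_apply_zero_of_monotone hV]
  | succ i ih =>
    rw [distinctRank_apply_succ_of_monotone hU, distinctRank_apply_succ_of_monotone hV, ih,
      if_congr (hties i) rfl rfl]

end Sorted

theorem mpe2_equivalent_to_arithmetic (n : ℕ) (U V : Fin (n + 1) → ℝ)
    (pU pV : Equiv.Perm (Fin (n + 1)))
    (hpU : ∀ j k : Fin (n + 1), j < k →
      (U (pU j) < U (pU k) ∨ (U (pU j) = U (pU k) ∧ pU j < pU k)))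
    (hpV : ∀ j k : Fin (n + 1), j < k →
      (V (pV j) < V (pV k) ∨ (V (pV j) = V (pV k) ∧ pV j < pV k))) :
    ((fun i => ((Finset.image U Finset.univ).filter (fun x => x < U i)).card) =
      (fun i => ((Finset.image V Finset.univ).filter (fun x => x < V i)).card)) ↔
    (pU = pV ∧
      (fun i : Fin n => decide (U (pU i.succ) = U (pU i.castSucc))) =
        (fun i : Fin n => decide (V (pV i.succ) = V (pV i.castSucc)))) := by
  change distinctRank U = distinctRank V ↔ _
  rw [Tuple.eq_sort_of_lt_imp hpU, Tuple.eq_sort_of_lt_imp hpV]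
  constructor
  · intro hrank
    have hlt : ∀ i j, U i < U j ↔ V i < V j := fun i j => by
      rw [← distinctRank_lt_distinctRank_iff, hrank, distinctRank_lt_distinctRank_iff]
    rw [Tuple.sort_eq_sort_of_lt_iff_lt hlt]
    exact ⟨rfl, funext fun i => decide_eq_decide.2 (eq_iff_eq_of_lt_iff_lt hlt _ _)⟩
  · rintro ⟨hsort, hties⟩
    have hV := Tuple.monotone_sort V
    rw [← hsort] at hV hties
    exact distinctRank_eq_of_monotone_of_ties (Tuple.monotone_sort U) hV
      fun i => decide_eq_decide.1 (congrFun hties i)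
end
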